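/- Let Γ be a finitely generated group such that every finite-index subgroup of Γ has finite abelianization. Assume that for every field K and every integer n ≥ 1, every group homomorphism Γ → GL_n(K) has virtually solvable image. Then for every commutative unital ring R and every integer n ≥ 1, every group homomorphism Γ → GL_n(R) has finite image. -/

import Mathlib

/-!
A group `Γ` with property (FAb) cannot have an infinite solvable quotient: going down the derived
series, each term has finite index, because it is the commutator subgroup of a finite-index
subgroup with finite abelianization. Hence every virtually solvable image of `Γ` is finite.

For a linear representation `ρ : Γ → GL_n(R)`, the matrix entries of the images of finitely many
generators lie in a finitely generated, hence noetherian, subring, so we may assume `R` noetherian.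
It has finitely many minimal primes `p`, and composing with `R → Frac(R/p)` gives
representations over fields, whose images are virtually solvable, hence finite. The intersection
of their kernels is a finite-index subgroup mapped into the congruence subgroup of the nilradical;
as the nilradical is nilpotent, that congruence subgroup is solvable, since commutators of the
congruence subgroups of `I` and `J` lie in that of `I * J`.
-/

/-- A group is virtually solvable if it contains a solvable subgroup of finite index. -/
def IsVirtuallySolvable (G : Type*) [Group G] : Prop :=
  ∃ H : Subgroup G, H.FiniteIndex ∧ IsSolvable H

universe u

open Subgroup

theorem Abelianization.map_surjective {G H : Type*} [Group G] [Group H] {f : G →* H}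
    (hf : Function.Surjective f) : Function.Surjective (Abelianization.map f) := by
  intro x
  obtain ⟨b, rfl⟩ := QuotientGroup.mk_surjective x
  obtain ⟨a, rfl⟩ := hf b
  exact ⟨of a, map_of f a⟩

theorem Subgroup.isSolvable_of_le_of_commutator_le {G : Type*} [Group G] {H : Subgroup G}
    (C : ℕ → Subgroup G) (hH : H ≤ C 0) (hC : ∀ k, ⁅C k, C k⁆ ≤ C (k + 1)) {N : ℕ}
    (hN : C N = ⊥) : Group.IsSolvable H := by
  have hle : ∀ k, (derivedSeries H k).map H.subtype ≤ C k := by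
    intro k
    induction k with
    | zero => rwa [derivedSeries_zero, ← MonoidHom.range_eq_map, range_subtype]
    | succ k ih =>
      rw [derivedSeries_succ, map_commutator]
      exact (commutator_mono ih ih).trans (hC k)
  refine ⟨N, ?_⟩
  rw [← map_eq_bot_iff_of_injective _ H.subtype_injective, ← le_bot_iff, ← hN]
  exact hle N

/-- Property (FAb). -/
def Group.FAb (G : Type*) [Group G] : Prop :=
  ∀ H : Subgroup G, H.FiniteIndex → Finite (Abelianization H)

namespace Group.FAb

variable {G G' : Type*} [Group G] [Group G']

theorem of_surjective (hG : FAb G) {f : G →* G'} (hf : Function.Surjective f) : FAb G' := by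
  intro K hK
  have : (K.comap f).FiniteIndex := ⟨by rw [K.index_comap_of_surjective hf]; exact hK.1⟩
  have := hG _ this
  exact Finite.of_surjective _
    (Abelianization.map_surjective (f.subgroupComap_surjective_of_surjective K hf))

theorem subgroup (hG : FAb G) (H : Subgroup G) [hH : H.FiniteIndex] : FAb H := by
  intro K hK
  have : (K.map H.subtype).FiniteIndex :=
    ⟨by rw [index_map_subtype]; exact mul_ne_zero hK.1 hH.1⟩
  have := hG _ this
  exact Finite.of_equiv _
    (K.equivMapOfInjective H.subtype H.subtype_injective).symm.abelianizationCongr.toEquiv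

theorem finiteIndex_derivedSeries (hG : FAb G) (k : ℕ) : (derivedSeries G k).FiniteIndex := by
  induction k with
  | zero => rw [derivedSeries_zero]; infer_instance
  | succ k ih =>
    have hD : (commutator (derivedSeries G k)).FiniteIndex :=
      finiteIndex_iff_finite_quotient.mpr (hG _ ih)
    refine ⟨?_⟩
    rw [derivedSeries_succ, ← map_subtype_commutator, index_map_subtype]
    exact mul_ne_zero hD.1 ih.1

theorem finite_of_isSolvable [hs : Group.IsSolvable G] (hG : FAb G) : Finite G := by
  obtain ⟨N, hN⟩ := hs.solvable
  have := hN ▸ hG.finiteIndex_derivedSeries N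
  exact (finite_iff_finite_and_finiteIndex ⊥).mpr ⟨inferInstance, this⟩

theorem finite_of_isVirtuallySolvable (hG : FAb G) (hvs : IsVirtuallySolvable G) : Finite G := by
  obtain ⟨H, hH, hsol⟩ := hvs
  have : Group.IsSolvable H := hsol
  have : Finite H := (hG.subgroup H).finite_of_isSolvable
  exact (finite_iff_finite_and_finiteIndex H).mpr ⟨this, hH⟩

theorem finite_range (hG : FAb G) (f : G →* G') (hf : IsVirtuallySolvable f.range) :
    Finite f.range :=
  (hG.of_surjective f.rangeRestrict_surjective).finite_of_isVirtuallySolvable hf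

theorem finite_range_of_finiteIndex_comap (hG : FAb G) (f : G →* G') (S : Subgroup G')
    [Group.IsSolvable S] (hS : (S.comap f).FiniteIndex) : Finite f.range := by
  refine hG.finite_range f ⟨S.subgroupOf f.range, ⟨?_⟩, ?_⟩
  · rw [← relIndex, ← index_comap]
    exact hS.1
  · exact isSolvable_of_isSolvable_injective (f := f.range.subtype.subgroupComap S)
      fun x y hxy => Subtype.ext (Subtype.ext congr(($hxy : G')))

end Group.FAb

theorem Ideal.mul_mem_matrix_mul {R : Type*} [CommRing R] {n : Type*} [Fintype n] [DecidableEq n]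
    {I J : Ideal R} {M N : Matrix n n R} (hM : M ∈ I.matrix n) (hN : N ∈ J.matrix n) :
    M * N ∈ (I * J).matrix n := fun i j =>
  Ideal.sum_mem _ fun k _ => Ideal.mul_mem_mul (hM i k) (hN k j)

namespace Matrix.GeneralLinearGroup

variable {n A : Type*} [Fintype n] [DecidableEq n] [CommRing A]

def congruenceSubgroup (I : Ideal A) : Subgroup (GL n A) :=
  (map (Ideal.Quotient.mk I)).ker

theorem mem_ker_map_iff {B : Type*} [CommRing B] (σ : A →+* B) (u : GL n A) :
    u ∈ (map σ).ker ↔ (u : Matrix n n A) - 1 ∈ (RingHom.ker σ).matrix n := by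
  rw [MonoidHom.mem_ker, Units.ext_iff, Ideal.mem_matrix, ← Matrix.ext_iff]
  simp [Matrix.one_apply, sub_eq_zero, apply_ite σ]

theorem ker_map {B : Type*} [CommRing B] (σ : A →+* B) :
    (map σ).ker = congruenceSubgroup (n := n) (RingHom.ker σ) := by
  ext u
  rw [congruenceSubgroup, mem_ker_map_iff, mem_ker_map_iff, Ideal.mk_ker]

theorem mem_congruenceSubgroup_iff {I : Ideal A} {u : GL n A} :
    u ∈ congruenceSubgroup I ↔ (u : Matrix n n A) - 1 ∈ I.matrix n := by
  rw [congruenceSubgroup, mem_ker_map_iff, Ideal.mk_ker]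

theorem congruenceSubgroup_bot : congruenceSubgroup (n := n) (⊥ : Ideal A) = ⊥ := by
  ext u
  rw [mem_congruenceSubgroup_iff, Ideal.matrix_bot, Ideal.mem_bot, sub_eq_zero, mem_bot,
    Units.ext_iff, Units.val_one]

theorem iInf_congruenceSubgroup {ι : Sort*} (I : ι → Ideal A) :
    ⨅ i, congruenceSubgroup (n := n) (I i) = congruenceSubgroup (⨅ i, I i) := by
  ext u
  simp only [mem_iInf, mem_congruenceSubgroup_iff, Ideal.mem_matrix, Ideal.mem_iInf]
  exact forall_comm.trans (forall_congr' fun _ => forall_comm)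

theorem commutator_congruenceSubgroup_le (I J : Ideal A) :
    ⁅congruenceSubgroup (n := n) I, congruenceSubgroup (n := n) J⁆ ≤
      congruenceSubgroup (I * J) := by
  rw [commutator_le]
  intro u hu v hv
  rw [commutatorElement_def, mem_congruenceSubgroup_iff] at *
  have key : ((u * v * u⁻¹ * v⁻¹ : GL n A) : Matrix n n A) - 1 =
      (((u : Matrix n n A) - 1) * (v - 1) - (v - 1) * (u - 1)) *
        ((u⁻¹ * v⁻¹ : GL n A) : Matrix n n A) := by
    simp only [Units.val_mul]
    calc _ = (u : Matrix n n A) * v * ↑u⁻¹ * ↑v⁻¹ - v * (u * ↑u⁻¹) * ↑v⁻¹ := by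
          rw [u.mul_inv, mul_one, v.mul_inv]
      _ = _ := by noncomm_ring
  have hYX := Ideal.mul_mem_matrix_mul hv hu
  rw [mul_comm J I] at hYX
  have := Ideal.mul_mem_matrix_mul (sub_mem (Ideal.mul_mem_matrix_mul hu hv) hYX)
    (by simp : ((u⁻¹ * v⁻¹ : GL n A) : Matrix n n A) ∈ (⊤ : Ideal A).matrix n)
  rwa [Ideal.mul_top, ← key] at this

theorem isSolvable_congruenceSubgroup {I : Ideal A} (hI : IsNilpotent I) :
    Group.IsSolvable (congruenceSubgroup (n := n) I) := by
  obtain ⟨N, hN⟩ := hI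
  refine isSolvable_of_le_of_commutator_le (fun k => congruenceSubgroup (I ^ 2 ^ k))
    (by simp) (fun k => ?_) (N := N) ?_
  · rw [pow_succ, pow_mul, sq]
    exact commutator_congruenceSubgroup_le _ _
  · have : I ^ 2 ^ N = ⊥ :=
      le_bot_iff.mp ((Ideal.pow_le_pow_right N.lt_two_pow_self.le).trans hN.le)
    rw [this, congruenceSubgroup_bot]

theorem map_subtype_injective (S : Subring A) : Function.Injective (map (n := n) S.subtype) :=
  Units.map_injective (Matrix.map_injective Subtype.val_injective)

theorem mem_range_map_subtype {S : Subring A} {u : GL n A} (hu : ∀ i j, u i j ∈ S)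
    (hu' : ∀ i j, (u⁻¹ : GL n A) i j ∈ S) : u ∈ (map S.subtype).range := by
  have hinj : Function.Injective (RingHom.mapMatrix (m := n) S.subtype) :=
    Matrix.map_injective Subtype.val_injective
  refine ⟨⟨of fun i j => ⟨u i j, hu i j⟩, of fun i j => ⟨u⁻¹ i j, hu' i j⟩,
    hinj ?_, hinj ?_⟩, Units.ext rfl⟩
  · rw [map_mul, map_one]
    exact u.mul_inv
  · rw [map_mul, map_one]
    exact u.inv_mul

theorem exists_isNoetherianRing_le_range_map (G : Subgroup (GL n A)) (hG : G.FG) :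
    ∃ S : Subring A, IsNoetherianRing S ∧ G ≤ (map S.subtype).range := by
  obtain ⟨T, rfl⟩ := hG
  let E : Set A := ⋃ u ∈ T, ⋃ i, ⋃ j, {(u : Matrix n n A) i j, (u⁻¹ : GL n A) i j}
  have hE : E.Finite := T.finite_toSet.biUnion fun _ _ =>
    Set.finite_iUnion fun _ => Set.finite_iUnion fun _ => Set.toFinite _
  have hmem : ∀ u ∈ T, ∀ i j,
      (u : Matrix n n A) i j ∈ E ∧ (u⁻¹ : GL n A) i j ∈ E := by
    intro u hu i j
    simp only [E, Set.mem_iUnion]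
    exact ⟨⟨u, hu, i, j, by simp⟩, ⟨u, hu, i, j, by simp⟩⟩
  refine ⟨Subring.closure E, is_noetherian_subring_closure E hE,
    (closure_le _).mpr fun u hu => ?_⟩
  exact mem_range_map_subtype (fun i j => Subring.subset_closure (hmem u hu i j).1)
    (fun i j => Subring.subset_closure (hmem u hu i j).2)

theorem exists_isNoetherianRing_comp_eq {Γ : Type*} [Group Γ] [Group.FG Γ]
    (f : Γ →* GL n A) :
    ∃ (S : Subring A) (_ : IsNoetherianRing S) (ρ : Γ →* GL n S),
      (map S.subtype).comp ρ = f := by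
  obtain ⟨S, hS, hle⟩ := exists_isNoetherianRing_le_range_map f.range
    ((Group.fg_iff_subgroup_fg _).mp inferInstance)
  refine ⟨S, hS, (MonoidHom.ofInjective (map_subtype_injective S)).symm.toMonoidHom.comp
    (f.codRestrict _ fun γ => hle ⟨γ, rfl⟩), ?_⟩
  ext1 γ
  exact MonoidHom.apply_ofInjective_symm (map_subtype_injective S) _

end Matrix.GeneralLinearGroup

open Matrix.GeneralLinearGroup in
theorem Group.FAb.finite_range_of_isNoetherianRing {Γ : Type*} [Group Γ] (hΓ : Group.FAb Γ)
    {n : Type*} [Fintype n] [DecidableEq n] {A : Type u} [CommRing A] [IsNoetherianRing A]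
    (hfield : ∀ (K : Type u) [Field K] (ρ : Γ →* GL n K), IsVirtuallySolvable ρ.range)
    (ρ : Γ →* GL n A) : Finite ρ.range := by
  have hprime : ∀ p ∈ minimalPrimes A, ((congruenceSubgroup p).comap ρ).FiniteIndex := by
    intro p hp
    have : p.IsPrime := hp.1.1
    let σ : A →+* FractionRing (A ⧸ p) := (algebraMap _ _).comp (Ideal.Quotient.mk p)
    have hσ : RingHom.ker σ = p := by
      rw [RingHom.ker_comp_of_injective _ (IsFractionRing.injective _ _), Ideal.mk_ker]
    have := hΓ.finite_range _ (hfield _ ((Matrix.GeneralLinearGroup.map σ).comp ρ))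
    rw [← hσ, ← ker_map, MonoidHom.comap_ker]
    infer_instance
  have : Finite (minimalPrimes A) := (minimalPrimes.finite_of_isNoetherianRing A).to_subtype
  have hnil : ⨅ p : minimalPrimes A, (congruenceSubgroup p.1).comap ρ =
      (congruenceSubgroup (nilradical A)).comap ρ := by
    rw [← comap_iInf, iInf_congruenceSubgroup, ← sInf_eq_iInf', Ideal.sInf_minimalPrimes]
    rfl
  have := isSolvable_congruenceSubgroup (n := n) (IsNoetherianRing.isNilpotent_nilradical A)
  exact hΓ.finite_range_of_finiteIndex_comap ρ _
    (hnil ▸ Subgroup.finiteIndex_iInf fun p : minimalPrimes A => hprime p.1 p.2)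

/-- Non-linearity criterion: let `Γ` be a finitely generated group all of whose finite-index
subgroups have finite abelianization.  If every homomorphism from `Γ` to `GL_n(K)`, for
every field `K` and `n ≥ 1`, has virtually solvable image, then every homomorphism from `Γ`
to `GL_n(R)`, for any commutative unital ring `R` and `n ≥ 1`, has finite image. -/
theorem finite_image_in_ringLinear_of_virtuallySolvable_fieldLinear
    (Γ : Type) [Group Γ] [Group.FG Γ]
    (hab : ∀ H : Subgroup Γ, H.FiniteIndex → Finite (Abelianization H))
    (hfield : ∀ (K : Type) (_ : Field K) (n : ℕ), 1 ≤ n →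
      ∀ f : Γ →* Matrix.GeneralLinearGroup (Fin n) K, IsVirtuallySolvable ↥f.range)
    (R : Type) (_ : CommRing R) (n : ℕ) (hn : 1 ≤ n)
    (f : Γ →* Matrix.GeneralLinearGroup (Fin n) R) :
    Finite ↥f.range := by
  obtain ⟨S, _, ρ, rfl⟩ := Matrix.GeneralLinearGroup.exists_isNoetherianRing_comp_eq f
  have hΓ : Group.FAb Γ := hab
  have := hΓ.finite_range_of_isNoetherianRing (fun K _ => hfield K inferInstance n hn) ρ
  rw [MonoidHom.range_comp]
  exact Finite.of_equiv _
    (ρ.range.equivMapOfInjective _ (Matrix.GeneralLinearGroup.map_subtype_injective S)).toEquiv
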